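/- Mixing comparison lemma for point-process covariances: let F preserve a probability measure μ̃, A_ε a measurable set, and p ≥ 1 an integer. Define Δ(n) := sup over A ∈ 𝒢 with A ⊆ A_ε and B in the σ-algebra generated by ⋃_{j≥n} F^{-j}𝒢 of |μ̃(A ∩ B) − μ̃(A)μ̃(B)|. Suppose the indicator of each such B at level 1 can be modified on {τ_{A_ε} ≤ p} to be measurable with respect to ⋃_{j≥p+1} F^{-j}𝒢. Then Δ(1) ≤ Δ(p+1) + μ̃(A_ε)·(μ̃(τ_{A_ε} ≤ p | A_ε) + μ̃(τ_{A_ε} ≤ p)). -/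

import Mathlib

open MeasureTheory

lemma abs_toReal_sub_le_symmDiff {X : Type*} [MeasurableSpace X] (μ : Measure X)
    [IsFiniteMeasure μ] (U V : Set X) :
    |(μ U).toReal - (μ V).toReal| ≤ (μ (symmDiff U V)).toReal := by
  have key : ∀ U V : Set X, (μ U).toReal ≤ (μ V).toReal + (μ (symmDiff U V)).toReal := by
    intro U V
    have hsub : U ⊆ V ∪ symmDiff U V := by
      intro x hx
      by_cases hv : x ∈ V
      · exact Or.inl hv
      · exact Or.inr (Or.inl ⟨hx, hv⟩)
    have h1 : μ U ≤ μ V + μ (symmDiff U V) :=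
      le_trans (measure_mono hsub) (measure_union_le _ _)
    have := ENNReal.toReal_mono (by
      exact ENNReal.add_ne_top.2 ⟨measure_ne_top μ _, measure_ne_top μ _⟩) h1
    rwa [ENNReal.toReal_add (measure_ne_top μ _) (measure_ne_top μ _)] at this
  rw [abs_sub_le_iff]
  constructor
  · linarith [key U V]
  · have := key V U
    rw [symmDiff_comm] at this
    linarith

/-- Mixing comparison lemma: with `S n` the σ-algebra generated by the sets
`F^{-j} g`, `g ∈ 𝒢`, `j ≥ n`, and `Tp` the set where the first return time to `Aε`
is at most `p`, if every `S 1`-measurable set can be modified on `Tp` into an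
`S (p+1)`-measurable set, and `d` bounds the level-(p+1) correlations, then
`d + μ(Aε)(μ(Tp ∩ Aε)/μ(Aε) + μ(Tp))` bounds the level-1 correlations,
i.e. `Δ(1) ≤ Δ(p+1) + μ(Aε)(μ(τ ≤ p | Aε) + μ(τ ≤ p))`. -/
theorem stmt12 {X : Type*} [mX : MeasurableSpace X] (μ : Measure X) [IsProbabilityMeasure μ]
    (F : X → X) (hF : MeasurePreserving F μ μ) (Aε : Set X) (hAε : MeasurableSet Aε)
    (G : Set (Set X)) (hG : G.Finite) (hGmeas : ∀ g ∈ G, MeasurableSet g)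
    (p : ℕ) (hp : 1 ≤ p)
    (S : ℕ → MeasurableSpace X)
    (hS : ∀ n, S n = MeasurableSpace.generateFrom
      {s : Set X | ∃ j : ℕ, n ≤ j ∧ ∃ g ∈ G, s = F^[j] ⁻¹' g})
    (Tp : Set X) (hTp : Tp = {x | ∃ n : ℕ, 1 ≤ n ∧ n ≤ p ∧ F^[n] x ∈ Aε})
    (hstruct : ∀ B : Set X, MeasurableSet[S 1] B →
      ∃ C : Set X, MeasurableSet[S (p + 1)] C ∧ symmDiff B C ⊆ Tp)
    (d : ℝ) (hd : 0 ≤ d)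
    (hΔp : ∀ A ∈ G, A ⊆ Aε → ∀ C : Set X, MeasurableSet[S (p + 1)] C →
      |(μ (A ∩ C)).toReal - (μ A).toReal * (μ C).toReal| ≤ d) :
    ∀ A ∈ G, A ⊆ Aε → ∀ B : Set X, MeasurableSet[S 1] B →
      |(μ (A ∩ B)).toReal - (μ A).toReal * (μ B).toReal|
        ≤ d + (μ Aε).toReal
          * ((μ (Tp ∩ Aε)).toReal / (μ Aε).toReal + (μ Tp).toReal) := by
  intro A hAG hAAε B hB
  obtain ⟨C, hC, hBC⟩ := hstruct B hB
  have hmain := hΔp A hAG hAAε C hC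
  -- |μ(A∩B) - μ(A∩C)| ≤ μ(Tp ∩ Aε)
  have h1 : |(μ (A ∩ B)).toReal - (μ (A ∩ C)).toReal| ≤ (μ (Tp ∩ Aε)).toReal := by
    refine le_trans (abs_toReal_sub_le_symmDiff μ _ _) ?_
    apply ENNReal.toReal_mono (measure_ne_top μ _)
    apply measure_mono
    intro x hx
    rw [Set.symmDiff_def] at hx
    rcases hx with ⟨⟨hxA, hxB⟩, hxC⟩ | ⟨⟨hxA, hxC⟩, hxB⟩
    · exact ⟨hBC (Or.inl ⟨hxB, fun h => hxC ⟨hxA, h⟩⟩), hAAε hxA⟩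
    · exact ⟨hBC (Or.inr ⟨hxC, fun h => hxB ⟨hxA, h⟩⟩), hAAε hxA⟩
  -- |μ B - μ C| ≤ μ Tp
  have h2 : |(μ B).toReal - (μ C).toReal| ≤ (μ Tp).toReal := by
    refine le_trans (abs_toReal_sub_le_symmDiff μ _ _) ?_
    exact ENNReal.toReal_mono (measure_ne_top μ _) (measure_mono hBC)
  have hAle : (μ A).toReal ≤ (μ Aε).toReal :=
    ENNReal.toReal_mono (measure_ne_top μ _) (measure_mono hAAε)
  have hA0 : 0 ≤ (μ A).toReal := ENNReal.toReal_nonneg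
  have hAε0 : 0 ≤ (μ Aε).toReal := ENNReal.toReal_nonneg
  have hTp0 : 0 ≤ (μ Tp).toReal := ENNReal.toReal_nonneg
  have htri : |(μ (A ∩ B)).toReal - (μ A).toReal * (μ B).toReal|
      ≤ d + (μ (Tp ∩ Aε)).toReal + (μ A).toReal * (μ Tp).toReal := by
    have hmul : |(μ A).toReal * (μ B).toReal - (μ A).toReal * (μ C).toReal|
        ≤ (μ A).toReal * (μ Tp).toReal := by
      rw [← mul_sub, abs_mul, abs_of_nonneg hA0]
      exact mul_le_mul_of_nonneg_left h2 hA0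
    calc |(μ (A ∩ B)).toReal - (μ A).toReal * (μ B).toReal|
        ≤ |(μ (A ∩ C)).toReal - (μ A).toReal * (μ C).toReal|
          + |(μ (A ∩ B)).toReal - (μ (A ∩ C)).toReal|
          + |(μ A).toReal * (μ B).toReal - (μ A).toReal * (μ C).toReal| := by
          rw [abs_sub_comm ((μ A).toReal * (μ B).toReal)]
          have := abs_sub_le ((μ (A ∩ B)).toReal) ((μ (A ∩ C)).toReal)
            ((μ A).toReal * (μ B).toReal)
          have h' := abs_sub_le ((μ (A ∩ C)).toReal) ((μ A).toReal * (μ C).toReal)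
            ((μ A).toReal * (μ B).toReal)
          rw [abs_sub_comm ((μ (A ∩ B)).toReal)] at *
          calc |(μ A).toReal * (μ B).toReal - (μ (A ∩ B)).toReal|
              ≤ _ := abs_sub_le _ ((μ (A ∩ C)).toReal) _
            _ ≤ _ := by
                rw [abs_sub_comm ((μ A).toReal * (μ B).toReal) ((μ (A ∩ C)).toReal)]
                have := abs_sub_le ((μ (A ∩ C)).toReal) ((μ A).toReal * (μ C).toReal)
                  ((μ A).toReal * (μ B).toReal)
                rw [abs_sub_comm ((μ A).toReal * (μ C).toReal)] at this
                linarith [abs_sub_comm ((μ (A ∩ B)).toReal) ((μ (A ∩ C)).toReal)]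
      _ ≤ d + (μ (Tp ∩ Aε)).toReal + (μ A).toReal * (μ Tp).toReal := by
          rw [abs_sub_comm ((μ (A ∩ B)).toReal)] at h1
          linarith [abs_sub_comm ((μ (A ∩ B)).toReal) ((μ (A ∩ C)).toReal)]
  refine le_trans htri ?_
  rcases eq_or_lt_of_le hAε0 with h0 | h0
  · have hA0' : (μ A).toReal = 0 := le_antisymm (h0 ▸ hAle) hA0
    have hT0 : (μ (Tp ∩ Aε)).toReal = 0 := by
      have : μ (Tp ∩ Aε) ≤ μ Aε := measure_mono Set.inter_subset_right
      have h00 : μ Aε = 0 := by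
        have := (ENNReal.toReal_eq_zero_iff _).1 h0.symm
        rcases this with h | h
        · exact h
        · exact absurd h (measure_ne_top μ _)
      simp [le_antisymm (this.trans h00.le) zero_le]
    rw [hA0', hT0, ← h0]
    simp [hd]
  · rw [mul_add, mul_div_cancel₀ _ (ne_of_gt h0)]
    have : (μ A).toReal * (μ Tp).toReal ≤ (μ Aε).toReal * (μ Tp).toReal :=
      mul_le_mul_of_nonneg_right hAle hTp0
    linarith
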